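/- arXiv:1203.2390 — 5 statements merged into one kernel-verified Lean document; each statement's English description precedes it below -/
import Mathlib

section
/- Let A be an n×n complex matrix and suppose the Hermitian part H = (A* + A)/2 of A is positive definite. Then for any vector r ≠ 0, the real quadratic α ↦ ‖r - αAr‖² attains a minimum value ‖r‖²(1 - (r*Hr / (‖r‖‖Ar‖))²), and hence there exists α with ‖r - αAr‖ ≤ ρ‖r‖ where ρ = sqrt(1 - (λmin(H)/‖A‖)²) < 1. -/
open Matrix
open scoped ComplexOrder

noncomputable def opNorm {n : ℕ} (A : Matrix (Fin n) (Fin n) ℂ) : ℝ :=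
  ‖Matrix.toEuclideanCLM (𝕜 := ℂ) A‖

noncomputable def mulVecE {n : ℕ} (A : Matrix (Fin n) (Fin n) ℂ)
    (v : EuclideanSpace ℂ (Fin n)) : EuclideanSpace ℂ (Fin n) :=
  WithLp.toLp 2 (A.mulVec v)

/-! Completing the square in the real quadratic `α ↦ ‖r - α • s‖²` gives its minimum
`‖r‖² (1 - cos² θ)` with `cos θ = Re⟪r, s⟫ / (‖r‖ ‖s‖)`. For `s = A r` one has
`Re⟪r, A r⟫ = r* H r ≥ λmin(H) ‖r‖²` and `‖A r‖ ≤ ‖A‖ ‖r‖`, so `cos θ ≥ λmin(H) / ‖A‖ > 0`. -/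

section

open RCLike
open scoped InnerProductSpace

variable {𝕜 E : Type*} [RCLike 𝕜] [NormedAddCommGroup E] [InnerProductSpace 𝕜 E] (r s : E)

theorem norm_sub_ofReal_smul_sq (β : ℝ) :
    ‖r - (β : 𝕜) • s‖ ^ 2 = ‖r‖ ^ 2 - 2 * β * re ⟪r, s⟫_𝕜 + β ^ 2 * ‖s‖ ^ 2 := by
  rw [@norm_sub_sq 𝕜, inner_smul_right, norm_smul, re_ofReal_mul, norm_ofReal,
    mul_pow, sq_abs]
  ring

theorem norm_sq_mul_one_sub_sq_re_inner_div_eq :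
    ‖r‖ ^ 2 * (1 - (re ⟪r, s⟫_𝕜 / (‖r‖ * ‖s‖)) ^ 2) = ‖r‖ ^ 2 - re ⟪r, s⟫_𝕜 ^ 2 / ‖s‖ ^ 2 := by
  rcases eq_or_ne r 0 with rfl | hr
  · simp
  have := norm_ne_zero_iff.2 hr
  field_simp

theorem norm_sub_ofReal_re_inner_div_norm_sq_smul_sq :
    ‖r - ((re ⟪r, s⟫_𝕜 / ‖s‖ ^ 2 : ℝ) : 𝕜) • s‖ ^ 2
      = ‖r‖ ^ 2 * (1 - (re ⟪r, s⟫_𝕜 / (‖r‖ * ‖s‖)) ^ 2) := by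
  rw [norm_sub_ofReal_smul_sq, norm_sq_mul_one_sub_sq_re_inner_div_eq]
  rcases eq_or_ne s 0 with rfl | hs
  · simp
  have := norm_ne_zero_iff.2 hs
  field_simp
  ring

theorem norm_sq_mul_one_sub_sq_le_norm_sub_ofReal_smul_sq (β : ℝ) :
    ‖r‖ ^ 2 * (1 - (re ⟪r, s⟫_𝕜 / (‖r‖ * ‖s‖)) ^ 2) ≤ ‖r - (β : 𝕜) • s‖ ^ 2 := by
  rw [norm_sub_ofReal_smul_sq, norm_sq_mul_one_sub_sq_re_inner_div_eq]
  rcases eq_or_ne s 0 with rfl | hs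
  · simp
  have hs2 : 0 < ‖s‖ ^ 2 := by positivity
  have : 2 * β * re ⟪r, s⟫_𝕜 - β ^ 2 * ‖s‖ ^ 2 ≤ re ⟪r, s⟫_𝕜 ^ 2 / ‖s‖ ^ 2 := by
    rw [le_div_iff₀ hs2]
    nlinarith [sq_nonneg (re ⟪r, s⟫_𝕜 - β * ‖s‖ ^ 2)]
  linarith

variable {r s}

theorem le_of_mul_norm_sq_le_re_inner {m M : ℝ} (hr : r ≠ 0) (hmr : m * ‖r‖ ^ 2 ≤ re ⟪r, s⟫_𝕜)
    (hsM : ‖s‖ ≤ M * ‖r‖) : m ≤ M := by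
  have hr' : 0 < ‖r‖ := norm_pos_iff.2 hr
  have : m * ‖r‖ ^ 2 ≤ M * ‖r‖ ^ 2 :=
    calc m * ‖r‖ ^ 2 ≤ re ⟪r, s⟫_𝕜 := hmr
      _ ≤ ‖r‖ * ‖s‖ := re_inner_le_norm r s
      _ ≤ ‖r‖ * (M * ‖r‖) := by gcongr
      _ = M * ‖r‖ ^ 2 := by ring
  exact le_of_mul_le_mul_right this (by positivity)

theorem exists_norm_sub_ofReal_smul_le {m M : ℝ} (hm : 0 < m) (hr : r ≠ 0)
    (hmr : m * ‖r‖ ^ 2 ≤ re ⟪r, s⟫_𝕜) (hsM : ‖s‖ ≤ M * ‖r‖) :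
    ∃ α : ℝ, ‖r - (α : 𝕜) • s‖ ≤ √(1 - (m / M) ^ 2) * ‖r‖ := by
  set c := re ⟪r, s⟫_𝕜
  have hr' : 0 < ‖r‖ := norm_pos_iff.2 hr
  have hM : 0 < M := hm.trans_le (le_of_mul_norm_sq_le_re_inner hr hmr hsM)
  have hrs : 0 < ‖r‖ * ‖s‖ := (by positivity : 0 < m * ‖r‖ ^ 2).trans_le
    (hmr.trans (re_inner_le_norm r s))
  have hratio : m / M ≤ c / (‖r‖ * ‖s‖) := by
    rw [div_le_div_iff₀ hM hrs]
    calc m * (‖r‖ * ‖s‖) ≤ m * (‖r‖ * (M * ‖r‖)) := by gcongr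
      _ = M * (m * ‖r‖ ^ 2) := by ring
      _ ≤ c * M := by rw [mul_comm M]; gcongr
  refine ⟨c / ‖s‖ ^ 2, ?_⟩
  calc ‖r - ((c / ‖s‖ ^ 2 : ℝ) : 𝕜) • s‖ = √(‖r - ((c / ‖s‖ ^ 2 : ℝ) : 𝕜) • s‖ ^ 2) :=
        (Real.sqrt_sq (norm_nonneg _)).symm
    _ = √(‖r‖ ^ 2 * (1 - (c / (‖r‖ * ‖s‖)) ^ 2)) := by rw [norm_sub_ofReal_re_inner_div_norm_sq_smul_sq]
    _ ≤ √(‖r‖ ^ 2 * (1 - (m / M) ^ 2)) := by gcongr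
    _ = √(1 - (m / M) ^ 2) * ‖r‖ := by
        rw [Real.sqrt_mul (by positivity), Real.sqrt_sq hr'.le, mul_comm]

end

namespace Matrix

variable {𝕜 n : Type*} [RCLike 𝕜] [Fintype n]

open RCLike

open MatrixOrder in
theorem IsHermitian.iInf_eigenvalues_mul_norm_sq_le [DecidableEq n] {A : Matrix n n 𝕜}
    (hA : A.IsHermitian) (x : EuclideanSpace 𝕜 n) :
    (⨅ i, hA.eigenvalues i) * ‖x‖ ^ 2 ≤ re (star x.ofLp ⬝ᵥ A *ᵥ x.ofLp) := by
  set c := ⨅ i, hA.eigenvalues i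
  have hle : algebraMap ℝ (Matrix n n 𝕜) c ≤ A := by
    rw [algebraMap_le_iff_le_spectrum hA.isSelfAdjoint, hA.spectrum_real_eq_range_eigenvalues]
    rintro _ ⟨i, rfl⟩
    exact ciInf_le (Finite.bddBelow_range _) i
  have hx : re (star x.ofLp ⬝ᵥ x.ofLp) = ‖x‖ ^ 2 := by
    rw [← inner_self_eq_norm_sq (𝕜 := 𝕜), EuclideanSpace.inner_eq_star_dotProduct, dotProduct_comm]
  have := hle.re_dotProduct_nonneg x.ofLp
  rw [Algebra.algebraMap_eq_smul_one, sub_mulVec, smul_mulVec, one_mulVec, dotProduct_sub,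
    dotProduct_smul, map_sub, smul_re, hx] at this
  linarith

theorem PosDef.iInf_eigenvalues_pos [DecidableEq n] [Nonempty n] {A : Matrix n n 𝕜}
    (hA : A.PosDef) : 0 < ⨅ i, hA.1.eigenvalues i := by
  obtain ⟨i, hi⟩ := exists_eq_ciInf_of_finite (f := hA.1.eigenvalues)
  exact hi ▸ hA.eigenvalues_pos i

theorem re_star_dotProduct_conjTranspose_mulVec (A : Matrix n n 𝕜) (x : n → 𝕜) :
    re (star x ⬝ᵥ Aᴴ *ᵥ x) = re (star x ⬝ᵥ A *ᵥ x) := by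
  rw [star_dotProduct, star_mulVec, conjTranspose_conjTranspose, ← dotProduct_mulVec,
    star_def, conj_re]

theorem re_star_dotProduct_hermitianPart_mulVec (A : Matrix n n 𝕜) (x : n → 𝕜) :
    re (star x ⬝ᵥ ((1 / 2 : 𝕜) • (Aᴴ + A)) *ᵥ x) = re (star x ⬝ᵥ A *ᵥ x) := by
  rw [smul_mulVec, add_mulVec, dotProduct_smul, dotProduct_add, smul_eq_mul, ← ofReal_ofNat,
    ← ofReal_one, ← ofReal_div, re_ofReal_mul, map_add, re_star_dotProduct_conjTranspose_mulVec]
  ring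

end Matrix

open scoped InnerProductSpace in
theorem stmt0_general {n : ℕ} (A : Matrix (Fin n) (Fin n) ℂ)
    (H : Matrix (Fin n) (Fin n) ℂ) (hHdef : H = (1 / 2 : ℂ) • (Aᴴ + A))
    (hH : H.PosDef) (r : EuclideanSpace ℂ (Fin n)) (hr : r ≠ 0) :
    (∃ α : ℝ,
      ‖r - (α : ℂ) • mulVecE A r‖ ^ 2
        = ‖r‖ ^ 2 * (1 - ((star (r : Fin n → ℂ) ⬝ᵥ H.mulVec r).re
            / (‖r‖ * ‖mulVecE A r‖)) ^ 2)
      ∧ ∀ β : ℝ,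
        ‖r‖ ^ 2 * (1 - ((star (r : Fin n → ℂ) ⬝ᵥ H.mulVec r).re
            / (‖r‖ * ‖mulVecE A r‖)) ^ 2)
          ≤ ‖r - (β : ℂ) • mulVecE A r‖ ^ 2)
    ∧ Real.sqrt (1 - ((⨅ i, hH.1.eigenvalues i) / opNorm A) ^ 2) < 1
    ∧ ∃ α : ℝ, ‖r - (α : ℂ) • mulVecE A r‖
        ≤ Real.sqrt (1 - ((⨅ i, hH.1.eigenvalues i) / opNorm A) ^ 2) * ‖r‖ := by
  have : Nonempty (Fin n) := not_isEmpty_iff.1 fun _ ↦ hr (Subsingleton.elim _ _)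
  have hc : (star r.ofLp ⬝ᵥ H *ᵥ r.ofLp).re = RCLike.re ⟪r, mulVecE A r⟫_ℂ := by
    rw [hHdef, ← RCLike.re_to_complex, re_star_dotProduct_hermitianPart_mulVec,
      EuclideanSpace.inner_eq_star_dotProduct, dotProduct_comm]
    rfl
  have hlam_pos := hH.iInf_eigenvalues_pos
  have hray := (hH.1.iInf_eigenvalues_mul_norm_sq_le r).trans_eq hc
  have hop : ‖mulVecE A r‖ ≤ opNorm A * ‖r‖ := (toEuclideanCLM (𝕜 := ℂ) A).le_opNorm r
  have hlam_le := le_of_mul_norm_sq_le_re_inner hr hray hop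
  rw [hc]
  refine ⟨⟨_, norm_sub_ofReal_re_inner_div_norm_sq_smul_sq _ _,
    norm_sq_mul_one_sub_sq_le_norm_sub_ofReal_smul_sq _ _⟩, ?_,
    exists_norm_sub_ofReal_smul_le hlam_pos hr hray hop⟩
  have := div_pos hlam_pos (hlam_pos.trans_le hlam_le)
  rw [Real.sqrt_lt' one_pos, one_pow]
  exact sub_lt_self 1 (by positivity)

theorem stmt0 {n : ℕ} (hn : 0 < n) (A : Matrix (Fin n) (Fin n) ℂ)
    (H : Matrix (Fin n) (Fin n) ℂ) (hHdef : H = (1 / 2 : ℂ) • (Aᴴ + A))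
    (hH : H.PosDef) (r : EuclideanSpace ℂ (Fin n)) (hr : r ≠ 0) :
    (∃ α : ℝ,
      ‖r - (α : ℂ) • mulVecE A r‖ ^ 2
        = ‖r‖ ^ 2 * (1 - ((star (r : Fin n → ℂ) ⬝ᵥ H.mulVec r).re
            / (‖r‖ * ‖mulVecE A r‖)) ^ 2)
      ∧ ∀ β : ℝ,
        ‖r‖ ^ 2 * (1 - ((star (r : Fin n → ℂ) ⬝ᵥ H.mulVec r).re
            / (‖r‖ * ‖mulVecE A r‖)) ^ 2)
          ≤ ‖r - (β : ℂ) • mulVecE A r‖ ^ 2)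
    ∧ Real.sqrt (1 - ((⨅ i, hH.1.eigenvalues i) / opNorm A) ^ 2) < 1
    ∧ ∃ α : ℝ, ‖r - (α : ℂ) • mulVecE A r‖
        ≤ Real.sqrt (1 - ((⨅ i, hH.1.eigenvalues i) / opNorm A) ^ 2) * ‖r‖ :=
  stmt0_general A H hHdef hH r hr
end

section
/- Let A be an n×n complex matrix and P a polynomial with P(0) = 0 such that the Hermitian part H of P(A) is positive definite. Then for every vector r ≠ 0 there exists a real scalar α such that ‖(I - αP(A))r‖ ≤ ρ‖r‖ where ρ = sqrt(1 - (min|λ(H)| / ‖P(A)‖)²) < 1. -/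
open Matrix
open scoped ComplexOrder

/-!
Put `T = P(A)` and `μ = min λ(H)`. Since `Re ⟪T x, x⟫ = ⟪H x, x⟫ ≥ μ ‖x‖²`, the real step
`α = Re ⟪T r, r⟫ / ‖T r‖²` minimises `‖r - α T r‖` over real `α`, with
`‖r - α T r‖² = ‖r‖² - Re ⟪T r, r⟫² / ‖T r‖² ≤ (1 - (μ / ‖T‖)²) ‖r‖²`,
because `Re ⟪T r, r⟫ ≥ μ ‖r‖²` and `‖T r‖ ≤ ‖T‖ ‖r‖`. The same two bounds give `0 < μ ≤ ‖T‖`,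
hence a contraction factor `< 1`.
-/

open scoped InnerProductSpace
open RCLike

section InnerProductSpace

variable {𝕜 E : Type*} [RCLike 𝕜] [NormedAddCommGroup E] [InnerProductSpace 𝕜 E]

theorem norm_sub_re_inner_div_smul_sq (r s : E) :
    ‖r - ((re ⟪s, r⟫_𝕜 / ‖s‖ ^ 2 : ℝ) : 𝕜) • s‖ ^ 2 = ‖r‖ ^ 2 - re ⟪s, r⟫_𝕜 ^ 2 / ‖s‖ ^ 2 := by
  rcases eq_or_ne s 0 with rfl | hs
  · simp
  have hs2 : ‖s‖ ^ 2 ≠ 0 := by positivity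
  rw [@norm_sub_sq 𝕜, inner_smul_right, norm_smul, inner_re_symm, re_ofReal_mul, norm_ofReal,
    mul_pow, sq_abs]
  field_simp
  ring

namespace ContinuousLinearMap

variable (T : E →L[𝕜] E) {μ : ℝ}

theorem exists_norm_sub_smul_apply_le (hμ : 0 ≤ μ) (hT : ∀ x, μ * ‖x‖ ^ 2 ≤ re ⟪T x, x⟫_𝕜)
    (r : E) : ∃ α : ℝ, ‖r - (α : 𝕜) • T r‖ ≤ √(1 - (μ / ‖T‖) ^ 2) * ‖r‖ := by
  set β := re ⟪T r, r⟫_𝕜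
  refine ⟨β / ‖T r‖ ^ 2, ?_⟩
  have hgain : (μ / ‖T‖) ^ 2 * ‖r‖ ^ 2 ≤ β ^ 2 / ‖T r‖ ^ 2 := by
    rcases eq_or_ne (T r) 0 with hs | hs
    · have hμr : μ * ‖r‖ ^ 2 ≤ 0 := by simpa [β, hs] using hT r
      have h : (μ / ‖T‖) ^ 2 * ‖r‖ ^ 2 = μ / ‖T‖ ^ 2 * (μ * ‖r‖ ^ 2) := by ring
      rw [hs, norm_zero, zero_pow two_ne_zero, div_zero, h]
      exact mul_nonpos_of_nonneg_of_nonpos (by positivity) hμr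
    have hTr : μ / ‖T‖ * ‖T r‖ ≤ μ * ‖r‖ := by
      rcases (norm_nonneg T).eq_or_lt with hT0 | hT0
      · simp only [← hT0, div_zero, zero_mul]
        positivity
      rw [div_mul_eq_mul_div, div_le_iff₀ hT0]
      nlinarith [T.le_opNorm r]
    have hβ : μ / ‖T‖ * ‖r‖ * ‖T r‖ ≤ β := by nlinarith [hT r, norm_nonneg r]
    rw [le_div_iff₀ (by positivity)]
    have : 0 ≤ μ / ‖T‖ * ‖r‖ * ‖T r‖ := by positivity
    nlinarith
  calc ‖r - ((β / ‖T r‖ ^ 2 : ℝ) : 𝕜) • T r‖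
      ≤ √((1 - (μ / ‖T‖) ^ 2) * ‖r‖ ^ 2) := by
        refine Real.le_sqrt_of_sq_le ?_
        rw [norm_sub_re_inner_div_smul_sq]
        linarith
    _ = √(1 - (μ / ‖T‖) ^ 2) * ‖r‖ := by
        rw [Real.sqrt_mul' _ (sq_nonneg _), Real.sqrt_sq (norm_nonneg r)]

theorem le_opNorm_of_forall_mul_norm_sq_le [Nontrivial E]
    (hT : ∀ x, μ * ‖x‖ ^ 2 ≤ re ⟪T x, x⟫_𝕜) : μ ≤ ‖T‖ := by
  obtain ⟨x, hx⟩ := exists_ne (0 : E)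
  refine le_of_mul_le_mul_right ?_ (by positivity : 0 < ‖x‖ ^ 2)
  calc μ * ‖x‖ ^ 2 ≤ re ⟪T x, x⟫_𝕜 := hT x
    _ ≤ ‖T x‖ * ‖x‖ := (re_le_norm _).trans (norm_inner_le_norm _ _)
    _ ≤ ‖T‖ * ‖x‖ * ‖x‖ := by gcongr; exact T.le_opNorm x
    _ = ‖T‖ * ‖x‖ ^ 2 := by ring

theorem re_inner_half_smul_adjoint_add_apply [CompleteSpace E] (x : E) :
    re ⟪((1 / 2 : 𝕜) • (adjoint T + T)) x, x⟫_𝕜 = re ⟪T x, x⟫_𝕜 := by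
  have h : (1 / 2 : 𝕜) = ((1 / 2 : ℝ) : 𝕜) := by push_cast; rfl
  rw [_root_.smul_apply, _root_.add_apply, h, inner_smul_real_left, smul_re, inner_add_left,
    adjoint_inner_left, map_add, inner_re_symm]
  ring

end ContinuousLinearMap

end InnerProductSpace

namespace Matrix

variable {𝕜 n : Type*} [RCLike 𝕜] [Fintype n] [DecidableEq n] {A : Matrix n n 𝕜}

theorem IsHermitian.posSemidef_sub_smul_one (hA : A.IsHermitian) {c : ℝ}
    (hc : ∀ i, c ≤ hA.eigenvalues i) : (A - (c : 𝕜) • 1).PosSemidef := by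
  have hshift : A - (c : 𝕜) • 1 = Unitary.conjStarAlgAut 𝕜 _ hA.eigenvectorUnitary
      (diagonal fun i ↦ ((hA.eigenvalues i - c : ℝ) : 𝕜)) := by
    conv_lhs => rw [hA.spectral_theorem]
    rw [← map_one (Unitary.conjStarAlgAut 𝕜 _ hA.eigenvectorUnitary), ← map_smul, ← map_sub,
      smul_one_eq_diagonal, diagonal_sub]
    simp
  rw [hshift, Unitary.conjStarAlgAut_apply, Unitary.isUnit_coe.posSemidef_star_right_conjugate_iff,
    posSemidef_diagonal_iff]
  exact fun i ↦ mod_cast sub_nonneg.mpr (hc i)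

theorem IsHermitian.mul_norm_sq_le_re_inner (hA : A.IsHermitian) {c : ℝ}
    (hc : ∀ i, c ≤ hA.eigenvalues i) (x : EuclideanSpace 𝕜 n) :
    c * ‖x‖ ^ 2 ≤ re ⟪toEuclideanCLM (𝕜 := 𝕜) A x, x⟫_𝕜 := by
  have hpos := isPositive_toEuclideanLin_iff.mpr (hA.posSemidef_sub_smul_one hc)
  have h := hpos.re_inner_nonneg_left x
  rw [← coe_toEuclideanCLM_eq_toEuclideanLin, ContinuousLinearMap.coe_coe, map_sub, map_smul,
    map_one, _root_.sub_apply, _root_.smul_apply, one_apply_eq_self, inner_sub_left,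
    inner_smul_left, map_sub, conj_ofReal, re_ofReal_mul, inner_self_eq_norm_sq] at h
  linarith

theorem PosDef.iInf_abs_eigenvalues_le (hA : A.PosDef) (i : n) :
    ⨅ j, |hA.1.eigenvalues j| ≤ hA.1.eigenvalues i :=
  (ciInf_le (Finite.bddBelow_range _) i).trans_eq (abs_of_pos (hA.eigenvalues_pos i))

theorem PosDef.iInf_abs_eigenvalues_pos [Nonempty n] (hA : A.PosDef) :
    0 < ⨅ j, |hA.1.eigenvalues j| := by
  obtain ⟨i, hi⟩ := exists_eq_ciInf_of_finite (f := fun j ↦ |hA.1.eigenvalues j|)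
  exact hi ▸ abs_pos.mpr (hA.eigenvalues_pos i).ne'

end Matrix

theorem mulVecE_eq_toEuclideanCLM {n : ℕ} (M : Matrix (Fin n) (Fin n) ℂ)
    (v : EuclideanSpace ℂ (Fin n)) : mulVecE M v = toEuclideanCLM (𝕜 := ℂ) M v :=
  rfl

theorem stmt1_general {n : ℕ} (hn : 0 < n) (A : Matrix (Fin n) (Fin n) ℂ)
    (P : Polynomial ℂ)
    (H : Matrix (Fin n) (Fin n) ℂ)
    (hHdef : H = (1 / 2 : ℂ) • ((Polynomial.aeval A P)ᴴ + Polynomial.aeval A P))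
    (hH : H.PosDef) :
    Real.sqrt (1 - ((⨅ i, |hH.1.eigenvalues i|) / opNorm (Polynomial.aeval A P)) ^ 2) < 1
    ∧ ∀ r : EuclideanSpace ℂ (Fin n), r ≠ 0 →
        ∃ α : ℝ, ‖mulVecE (1 - (α : ℂ) • Polynomial.aeval A P) r‖
          ≤ Real.sqrt (1 - ((⨅ i, |hH.1.eigenvalues i|)
              / opNorm (Polynomial.aeval A P)) ^ 2) * ‖r‖ := by
  have : Nonempty (Fin n) := Fin.pos_iff_nonempty.mp hn
  set T := toEuclideanCLM (𝕜 := ℂ) (Polynomial.aeval A P)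
  have hHT : toEuclideanCLM (𝕜 := ℂ) H = (1 / 2 : ℂ) • (ContinuousLinearMap.adjoint T + T) := by
    rw [hHdef, map_smul, map_add, ← star_eq_conjTranspose, map_star,
      ContinuousLinearMap.star_eq_adjoint]
  have hcoercive : ∀ x, (⨅ i, |hH.1.eigenvalues i|) * ‖x‖ ^ 2 ≤ re ⟪T x, x⟫_ℂ := fun x ↦ by
    rw [← T.re_inner_half_smul_adjoint_add_apply, ← hHT]
    exact hH.1.mul_norm_sq_le_re_inner hH.iInf_abs_eigenvalues_le x
  have hμ := hH.iInf_abs_eigenvalues_pos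
  refine ⟨?_, fun r _ ↦ ?_⟩
  · have hμT := T.le_opNorm_of_forall_mul_norm_sq_le hcoercive
    rw [Real.sqrt_lt' one_pos, one_pow, sub_lt_self_iff]
    exact pow_pos (div_pos hμ (hμ.trans_le hμT)) 2
  · obtain ⟨α, hα⟩ := T.exists_norm_sub_smul_apply_le hμ.le hcoercive r
    refine ⟨α, ?_⟩
    rwa [mulVecE_eq_toEuclideanCLM, map_sub, map_smul, map_one, _root_.sub_apply,
      _root_.smul_apply, one_apply_eq_self]

theorem stmt1 {n : ℕ} (hn : 0 < n) (A : Matrix (Fin n) (Fin n) ℂ)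
    (P : Polynomial ℂ) (hP0 : P.coeff 0 = 0)
    (H : Matrix (Fin n) (Fin n) ℂ)
    (hHdef : H = (1 / 2 : ℂ) • ((Polynomial.aeval A P)ᴴ + Polynomial.aeval A P))
    (hH : H.PosDef) :
    Real.sqrt (1 - ((⨅ i, |hH.1.eigenvalues i|) / opNorm (Polynomial.aeval A P)) ^ 2) < 1
    ∧ ∀ r : EuclideanSpace ℂ (Fin n), r ≠ 0 →
        ∃ α : ℝ, ‖mulVecE (1 - (α : ℂ) • Polynomial.aeval A P) r‖
          ≤ Real.sqrt (1 - ((⨅ i, |hH.1.eigenvalues i|)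
              / opNorm (Polynomial.aeval A P)) ^ 2) * ‖r‖ :=
  stmt1_general hn A P H hHdef hH
end

section
/- Let A be an n×n complex matrix and P₁(X),...,P_m(X) complex polynomials. Suppose the vector sequence {t_n} satisfies t_n = Σ_{j=1}^m P_j(A) t_{n-j} for n ≥ 1 with initial values t₀,...,t_{1-m}. If for every eigenvalue λ of A, every root X of the polynomial P(λ,X) = X^m - Σ_{j=1}^m P_j(λ) X^{m-j} has |X| < 1, then t_n → 0 as n → ∞. -/
/-!
Stack `m` consecutive terms into a state vector `(t_N, …, t_{N-m+1})`; the recurrence becomes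
`s_{N+1} = T s_N` for the block companion operator `T` of `P₁(A), …, P_m(A)`. An eigenvector of
`T` with eigenvalue `z` has blocks `z^{m-1-l} w`, and its first block row reads `Q_z(A) w = 0` with
`Q_z(λ) = z^m - ∑ z^{m-j} P_j(λ)`. By spectral mapping `Q_z(μ) = 0` for some eigenvalue `μ` of `A`,
so `|z| < 1`. Hence the spectral radius of `T` is `< 1`, and Gelfand's formula gives `T^N → 0`.
-/

open Filter Topology Polynomial

section BanachAlgebra

variable {A : Type*} [NormedRing A] [NormedAlgebra ℂ A] [CompleteSpace A]

theorem tendsto_pow_atTop_nhds_zero_of_spectralRadius_lt_one {a : A}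
    (ha : spectralRadius ℂ a < 1) : Tendsto (a ^ ·) atTop (𝓝 0) := by
  obtain ⟨c, hρc, hc1⟩ := ENNReal.lt_iff_exists_nnreal_btwn.mp ha
  have hbound : ∀ᶠ k : ℕ in atTop, ‖a ^ k‖ ≤ (c : ℝ) ^ k := by
    filter_upwards [(spectrum.pow_nnnorm_pow_one_div_tendsto_nhds_spectralRadius a).eventually_lt_const
      hρc, eventually_gt_atTop 0] with k hk hk0
    rw [one_div, ENNReal.rpow_inv_lt_iff (by positivity), ENNReal.rpow_natCast] at hk
    exact_mod_cast hk.le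
  exact squeeze_zero_norm' hbound
    (tendsto_pow_atTop_nhds_zero_of_lt_one c.2 (by exact_mod_cast hc1))

theorem tendsto_pow_atTop_nhds_zero_of_forall_mem_spectrum_norm_lt_one {a : A}
    (ha : ∀ z ∈ spectrum ℂ a, ‖z‖ < 1) : Tendsto (a ^ ·) atTop (𝓝 0) := by
  cases subsingleton_or_nontrivial A
  · simpa only [Subsingleton.elim _ (0 : A)] using tendsto_const_nhds
  · exact tendsto_pow_atTop_nhds_zero_of_spectralRadius_lt_one
      (spectrum.spectralRadius_lt_of_forall_lt a fun z hz => by exact_mod_cast ha z hz)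

end BanachAlgebra

theorem Module.End.tendsto_pow_apply_of_forall_mem_spectrum_norm_lt_one
    {V : Type*} [NormedAddCommGroup V] [NormedSpace ℂ V] [FiniteDimensional ℂ V]
    {f : Module.End ℂ V} (hf : ∀ z ∈ spectrum ℂ f, ‖z‖ < 1) (v : V) :
    Tendsto (fun N : ℕ => (f ^ N) v) atTop (𝓝 0) := by
  have : CompleteSpace V := FiniteDimensional.complete ℂ V
  let e : Module.End ℂ V ≃ₐ[ℂ] (V →L[ℂ] V) :=
    AlgEquiv.ofLinearEquiv LinearMap.toContinuousLinearMap rfl fun _ _ => rfl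
  have hpow := tendsto_pow_atTop_nhds_zero_of_forall_mem_spectrum_norm_lt_one
    (a := e f) (by rwa [AlgEquiv.spectrum_eq])
  refine (((ContinuousLinearMap.apply ℂ V v).continuous.tendsto 0).comp hpow).congr fun N => ?_
  simp only [Function.comp_apply, ContinuousLinearMap.apply_apply, ← map_pow]
  rfl

theorem Module.End.exists_mem_spectrum_eval_eq_zero {K V : Type*} [Field K] [IsAlgClosed K]
    [AddCommGroup V] [Module K V] [FiniteDimensional K V] (f : Module.End K V) (p : K[X])
    {w : V} (hw : w ≠ 0) (h : aeval f p w = 0) : ∃ μ ∈ spectrum K f, p.eval μ = 0 := by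
  have : Nontrivial V := ⟨⟨w, 0, hw⟩⟩
  obtain ⟨c, hc⟩ := f.exists_eigenvalue
  have h0 : (0 : K) ∈ spectrum K (aeval f p) := by
    rw [spectrum.zero_mem_iff]
    exact fun hu => hw (((Module.End.isUnit_iff _).mp hu).1 (h.trans (map_zero _).symm))
  rwa [spectrum.map_polynomial_aeval_of_nonempty f p ⟨c, hc.mem_spectrum⟩] at h0

section Companion

variable {R M : Type*} [CommSemiring R] [AddCommMonoid M] [Module R M] {k : ℕ}

def companion (C : Fin (k + 1) → Module.End R M) : Module.End R (Fin (k + 1) → M) where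
  toFun u := Fin.cons (∑ l, C l (u l)) fun l => u l.castSucc
  map_add' u v := by
    ext i
    refine Fin.cases ?_ (fun _ => ?_) i <;> simp [Finset.sum_add_distrib]
  map_smul' c u := by
    ext i
    refine Fin.cases ?_ (fun _ => ?_) i <;> simp [Finset.smul_sum]

variable {C : Fin (k + 1) → Module.End R M}

@[simp]
theorem companion_apply_zero (u : Fin (k + 1) → M) : companion C u 0 = ∑ l, C l (u l) :=
  rfl

@[simp]
theorem companion_apply_succ (u : Fin (k + 1) → M) (l : Fin k) :
    companion C u l.succ = u l.castSucc :=
  rfl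

section Eigenvector

variable {u : Fin (k + 1) → M} {z : R}

theorem eq_pow_smul_last_of_companion_eq_smul (hu : companion C u = z • u) (l : Fin (k + 1)) :
    u l = z ^ (k - l) • u (Fin.last k) := by
  induction l using Fin.reverseInduction with
  | last => simp
  | cast l ih =>
    have hl : k - l = k - (l + 1) + 1 := by omega
    rw [← companion_apply_succ (C := C) u, hu, Pi.smul_apply, ih, smul_smul, ← pow_succ']
    simp [hl]

theorem pow_succ_smul_last_of_companion_eq_smul (hu : companion C u = z • u) :
    z ^ (k + 1) • u (Fin.last k) = ∑ l : Fin (k + 1), z ^ (k - l : ℕ) • C l (u (Fin.last k)) := by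
  have htop := congrFun hu 0
  simp only [companion_apply_zero, Pi.smul_apply] at htop
  rw [eq_pow_smul_last_of_companion_eq_smul hu 0, smul_smul, Fin.val_zero, Nat.sub_zero,
    ← pow_succ'] at htop
  rw [← htop]
  refine Finset.sum_congr rfl fun l _ => ?_
  rw [eq_pow_smul_last_of_companion_eq_smul hu l, map_smul]

end Eigenvector

def history (k : ℕ) (t : ℤ → M) (N : ℤ) : Fin (k + 1) → M := fun l => t (N - l)

variable {t : ℤ → M}

theorem companion_history
    (ht : ∀ N : ℤ, 1 ≤ N → t N = ∑ l : Fin (k + 1), C l (t (N - (l + 1)))) (N : ℤ) (hN : 0 ≤ N) :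
    companion C (history k t N) = history k t (N + 1) := by
  ext l
  refine Fin.cases ?_ (fun l => ?_) l
  · simp only [companion_apply_zero, history, Fin.val_zero, Nat.cast_zero, sub_zero,
      ht (N + 1) (by omega), add_sub_add_right_eq_sub]
  · simp only [companion_apply_succ, history, Fin.val_succ, Fin.val_castSucc, Nat.cast_succ,
      add_sub_add_right_eq_sub]

theorem history_eq_companion_pow_apply
    (ht : ∀ N : ℤ, 1 ≤ N → t N = ∑ l : Fin (k + 1), C l (t (N - (l + 1)))) (N : ℕ) :
    history k t N = (companion C ^ N) (history k t 0) := by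
  induction N with
  | zero => rfl
  | succ N ih =>
    rw [pow_succ', Module.End.mul_apply, ← ih, companion_history ht _ (by positivity)]
    push_cast
    rfl

end Companion

theorem exists_mem_spectrum_of_mem_spectrum_companion {K V : Type*} [Field K] [IsAlgClosed K]
    [AddCommGroup V] [Module K V] [FiniteDimensional K V] {k : ℕ} (f : Module.End K V)
    (P : Fin (k + 1) → K[X]) {z : K}
    (hz : z ∈ spectrum K (companion fun l => aeval f (P l))) :
    ∃ μ ∈ spectrum K f, z ^ (k + 1) = ∑ l : Fin (k + 1), (P l).eval μ * z ^ (k - l : ℕ) := by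
  obtain ⟨u, hu⟩ := (Module.End.hasEigenvalue_iff_mem_spectrum.mpr hz).exists_hasEigenvector
  have hu_eq := hu.apply_eq_smul
  have hw : u (Fin.last k) ≠ 0 := fun h0 => hu.2 <| funext fun l => by
    rw [eq_pow_smul_last_of_companion_eq_smul hu_eq l, h0, smul_zero, Pi.zero_apply]
  obtain ⟨μ, hμ, hQ⟩ := f.exists_mem_spectrum_eval_eq_zero
    (C (z ^ (k + 1)) - ∑ l : Fin (k + 1), C (z ^ (k - l : ℕ)) * P l) hw
    (by
      simp only [map_sub, map_sum, _root_.map_mul, aeval_C, LinearMap.sub_apply,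
        LinearMap.sum_apply, Module.End.mul_apply, Module.algebraMap_end_apply]
      rw [pow_succ_smul_last_of_companion_eq_smul hu_eq, sub_self])
  refine ⟨μ, hμ, ?_⟩
  simpa [eval_finsetSum, sub_eq_zero, mul_comm] using hQ

theorem stmt6 {n : ℕ} (m : ℕ) (A : Matrix (Fin n) (Fin n) ℂ)
    (P : ℕ → Polynomial ℂ) (t : ℤ → Fin n → ℂ)
    (hrec : ∀ N : ℤ, 1 ≤ N →
      t N = ∑ j ∈ Finset.range m, (Polynomial.aeval A (P j)).mulVec (t (N - (j + 1))))
    (hroots : ∀ μ ∈ spectrum ℂ A, ∀ z : ℂ,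
      z ^ m = ∑ j ∈ Finset.range m, (P j).eval μ * z ^ (m - 1 - j) →
      ‖z‖ < 1) :
    Tendsto (fun N : ℕ => t (N : ℤ)) atTop (nhds 0) := by
  rcases m with _ | k
  · refine tendsto_const_nhds.congr' ((eventually_ge_atTop 1).mono fun N hN => ?_)
    simpa using (hrec N (by exact_mod_cast hN)).symm
  let f := Matrix.toLinAlgEquiv' A
  have ht : ∀ N : ℤ, 1 ≤ N → t N = ∑ l : Fin (k + 1), aeval f (P l) (t (N - (l + 1))) :=
    fun N hN => by simpa [f, aeval_algEquiv, Finset.sum_range] using hrec N hN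
  have hspec : ∀ z ∈ spectrum ℂ (companion fun l : Fin (k + 1) => aeval f (P l)), ‖z‖ < 1 := by
    intro z hz
    obtain ⟨μ, hμ, hzμ⟩ := exists_mem_spectrum_of_mem_spectrum_companion f (fun l => P l) hz
    exact hroots μ (by rwa [AlgEquiv.spectrum_eq] at hμ) z (by simpa [Finset.sum_range] using hzμ)
  refine (((continuous_apply 0).tendsto 0).comp
    (Module.End.tendsto_pow_apply_of_forall_mem_spectrum_norm_lt_one hspec (history k t 0))).congr
    fun N => ?_
  simp [← history_eq_companion_pow_apply ht, history]
end

section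
/- Let A be an n×n complex matrix and P₁,...,P_m polynomials such that for some eigenvalue λ of A, the polynomial P(λ,X) = X^m - Σ_{j=1}^m P_j(λ)X^{m-j} has a root of modulus R ≥ 1. Then there exist initial vectors t₀,...,t_{1-m} such that the sequence defined by t_n = Σ_{j=1}^m P_j(A) t_{n-j} does not converge to 0. -/
/-!
An eigenvector `v` of `A` for `μ` is an eigenvector of every `P_j(A)`, with eigenvalue `P_j(μ)`.
Hence `t_N = z^N • v` solves the vector recurrence as soon as `z` solves the scalar one
`z^m = ∑ P_j(μ) z^(m-1-j)`, and `‖t_N‖ = ‖z‖^N ‖v‖ ≥ ‖v‖ > 0` when `‖z‖ ≥ 1`.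
-/

open Matrix Filter Polynomial

theorem Matrix.exists_aeval_mulVec_eq_eval_smul {K ι : Type*} [Field K] [Fintype ι]
    [DecidableEq ι] {A : Matrix ι ι K} {μ : K} (hμ : μ ∈ spectrum K A) :
    ∃ v ≠ 0, ∀ p : K[X], aeval A p *ᵥ v = p.eval μ • v := by
  rw [← spectrum_toLin', ← Module.End.hasEigenvalue_iff_mem_spectrum] at hμ
  obtain ⟨v, hv⟩ := hμ.exists_hasEigenvector
  refine ⟨v, hv.2, fun p => ?_⟩
  rw [← Module.End.aeval_apply_of_hasEigenvector hv]
  exact congr($(aeval_algHom_apply toLinAlgEquiv' A p) v).symm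

theorem zpow_eq_sum_of_pow_eq_sum {K : Type*} [DivisionRing K] {z : K} (hz0 : z ≠ 0) {m : ℕ}
    {c : ℕ → K} (hz : z ^ m = ∑ j ∈ Finset.range m, c j * z ^ (m - 1 - j)) (N : ℤ) :
    z ^ N = ∑ j ∈ Finset.range m, c j * z ^ (N - (j + 1)) := by
  rw [show N = m + (N - m) by ring, zpow_add₀ hz0, zpow_natCast, hz, Finset.sum_mul]
  refine Finset.sum_congr rfl fun j hj => ?_
  have hjm : ((m - 1 - j : ℕ) : ℤ) = m - 1 - j := by
    have := Finset.mem_range.mp hj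
    omega
  rw [mul_assoc, ← zpow_natCast, ← zpow_add₀ hz0, hjm]
  ring_nf

theorem not_tendsto_pow_smul_nhds_zero {𝕜 E : Type*} [NormedField 𝕜] [NormedAddCommGroup E]
    [NormedSpace 𝕜 E] {z : 𝕜} (hz : 1 ≤ ‖z‖) {v : E} (hv : v ≠ 0) :
    ¬ Tendsto (fun N : ℕ => z ^ N • v) atTop (nhds 0) := by
  intro h
  have hle : ∀ N : ℕ, ‖v‖ ≤ ‖z ^ N • v‖ := fun N => by
    rw [norm_smul, norm_pow]
    exact le_mul_of_one_le_left (norm_nonneg v) (one_le_pow₀ hz)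
  have : ‖v‖ ≤ 0 := ge_of_tendsto' (by simpa using h.norm) hle
  exact hv (norm_le_zero_iff.mp this)

theorem stmt7 {n : ℕ} (m : ℕ) (A : Matrix (Fin n) (Fin n) ℂ)
    (P : ℕ → Polynomial ℂ) (μ : ℂ) (hμ : μ ∈ spectrum ℂ A) (z : ℂ)
    (hz : z ^ m = ∑ j ∈ Finset.range m, (P j).eval μ * z ^ (m - 1 - j))
    (hR : 1 ≤ ‖z‖) :
    ∃ t : ℤ → Fin n → ℂ,
      (∀ N : ℤ, 1 ≤ N →
        t N = ∑ j ∈ Finset.range m, (Polynomial.aeval A (P j)).mulVec (t (N - (j + 1))))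
      ∧ ¬ Tendsto (fun N : ℕ => t (N : ℤ)) atTop (nhds 0) := by
  obtain ⟨v, hv0, hv⟩ := exists_aeval_mulVec_eq_eval_smul hμ
  have hz0 : z ≠ 0 := norm_pos_iff.mp (one_pos.trans_le hR)
  refine ⟨fun N => z ^ N • v, fun N _ => ?_, ?_⟩
  · simp only [mulVec_smul, hv, smul_smul, ← Finset.sum_smul]
    rw [zpow_eq_sum_of_pow_eq_sum hz0 hz N]
    simp only [mul_comm]
  · simpa only [zpow_natCast] using not_tendsto_pow_smul_nhds_zero hR hv0
end

section
/- Minimization over an affine Krylov slab: let A be an n×n complex matrix with positive definite Hermitian part H, y a vector, and x_n any vector with residual r_n = y - Ax_n. Then the minimum of ‖y - Ax‖₂ over x in the affine space x_n + span{r_n} is at most sqrt(1 - (λmin(H)/‖A‖₂)²) · ‖r_n‖₂. -/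
open Matrix
open scoped ComplexOrder

/-!
Along the line `x_n + α r_n` the residual is `r_n - α A r_n`, so the best `α` projects `r_n`
orthogonally onto `A r_n` and leaves `‖r_n‖² (1 - cos² θ)`, where `θ` is the angle between `r_n`
and `A r_n`. The Rayleigh bound `Re ⟪r, A r⟫ = ⟪r, H r⟫ ≥ λmin(H) ‖r‖²` together with
`‖A r‖ ≤ ‖A‖ ‖r‖` gives `|cos θ| ≥ λmin(H) / ‖A‖`.
-/

open RCLike
open scoped InnerProductSpace

section InnerProductSpace

variable {𝕜 E : Type*} [RCLike 𝕜] [NormedAddCommGroup E] [InnerProductSpace 𝕜 E]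

theorem norm_sub_starProjection_singleton_sq (w r : E) :
    ‖r - (𝕜 ∙ w).starProjection r‖ ^ 2 = ‖r‖ ^ 2 - ‖⟪w, r⟫_𝕜‖ ^ 2 / ‖w‖ ^ 2 := by
  have hpyth := (𝕜 ∙ w).norm_sq_eq_add_norm_sq_starProjection r
  rw [Submodule.starProjection_orthogonal_val] at hpyth
  have hproj : ‖(𝕜 ∙ w).starProjection r‖ ^ 2 = ‖⟪w, r⟫_𝕜‖ ^ 2 / ‖w‖ ^ 2 := by
    rw [Submodule.starProjection_singleton, norm_smul, norm_div, norm_algebraMap',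
      Real.norm_of_nonneg (by positivity), mul_pow, div_pow]
    rcases eq_or_ne w 0 with rfl | hw
    · simp
    · field_simp [norm_ne_zero_iff.mpr hw]
  linarith

theorem exists_norm_sub_smul_le_of_le_norm_inner {r w : E} (hw : w ≠ 0) {κ : ℝ} (hκ : 0 ≤ κ)
    (hcos : κ * (‖r‖ * ‖w‖) ≤ ‖⟪w, r⟫_𝕜‖) :
    ∃ α : 𝕜, ‖r - α • w‖ ≤ √(1 - κ ^ 2) * ‖r‖ := by
  obtain ⟨α, hα⟩ := Submodule.mem_span_singleton.mp ((𝕜 ∙ w).starProjection_apply_mem r)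
  refine ⟨α, ?_⟩
  have hw2 : 0 < ‖w‖ ^ 2 := by positivity
  have hsq : ‖r - α • w‖ ^ 2 ≤ (1 - κ ^ 2) * ‖r‖ ^ 2 := by
    rw [hα, norm_sub_starProjection_singleton_sq]
    have hcos_sq : κ ^ 2 * ‖r‖ ^ 2 * ‖w‖ ^ 2 ≤ ‖⟪w, r⟫_𝕜‖ ^ 2 := by
      simpa [mul_pow, mul_assoc] using pow_le_pow_left₀ (by positivity) hcos 2
    have : κ ^ 2 * ‖r‖ ^ 2 ≤ ‖⟪w, r⟫_𝕜‖ ^ 2 / ‖w‖ ^ 2 := (le_div_iff₀ hw2).mpr hcos_sq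
    linarith
  calc ‖r - α • w‖ = √(‖r - α • w‖ ^ 2) := (Real.sqrt_sq (norm_nonneg _)).symm
    _ ≤ √((1 - κ ^ 2) * ‖r‖ ^ 2) := Real.sqrt_le_sqrt hsq
    _ = √(1 - κ ^ 2) * ‖r‖ := by
        rw [Real.sqrt_mul' _ (by positivity), Real.sqrt_sq (norm_nonneg _)]

theorem ContinuousLinearMap.exists_norm_sub_smul_apply_le_s13 (T : E →L[𝕜] E) {c : ℝ} (hc : 0 ≤ c)
    (hT : ∀ x, c * ‖x‖ ^ 2 ≤ re ⟪x, T x⟫_𝕜) (r : E) :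
    ∃ α : 𝕜, ‖r - α • T r‖ ≤ √(1 - (c / ‖T‖) ^ 2) * ‖r‖ := by
  by_cases hTr : T r = 0
  · refine ⟨0, ?_⟩
    have hcr : c * ‖r‖ ^ 2 ≤ 0 := by simpa [hTr] using hT r
    rcases hc.eq_or_lt with rfl | hc
    · simp
    · have hr : r = 0 := by simpa using nonpos_of_mul_nonpos_right hcr hc
      simp [hr]
  · refine exists_norm_sub_smul_le_of_le_norm_inner hTr (by positivity) ?_
    calc c / ‖T‖ * (‖r‖ * ‖T r‖) ≤ c / ‖T‖ * (‖r‖ * (‖T‖ * ‖r‖)) := by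
          gcongr; exact T.le_opNorm r
      _ = c / ‖T‖ * ‖T‖ * ‖r‖ ^ 2 := by ring
      _ ≤ c * ‖r‖ ^ 2 := by
          gcongr
          rcases eq_or_ne ‖T‖ 0 with h | h
          · simp [h, hc]
          · rw [div_mul_cancel₀ _ h]
      _ ≤ re ⟪r, T r⟫_𝕜 := hT r
      _ ≤ ‖⟪T r, r⟫_𝕜‖ := by rw [norm_inner_symm]; exact re_le_norm _

end InnerProductSpace

namespace Matrix

variable {𝕜 ι : Type*} [RCLike 𝕜] [Fintype ι] [DecidableEq ι]

theorem IsHermitian.iInf_eigenvalues_mul_norm_sq_le_re_inner {H : Matrix ι ι 𝕜}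
    (hH : H.IsHermitian) (x : EuclideanSpace 𝕜 ι) :
    (⨅ i, hH.eigenvalues i) * ‖x‖ ^ 2 ≤ re ⟪x, toEuclideanLin H x⟫_𝕜 := by
  set b := hH.eigenvectorBasis
  have hb (i : ι) : ⟪b i, toEuclideanLin H x⟫_𝕜 = hH.eigenvalues i * ⟪b i, x⟫_𝕜 := by
    have hHb : toEuclideanLin H (b i) = (hH.eigenvalues i : ℝ) • b i :=
      congrArg (WithLp.toLp 2) (hH.mulVec_eigenvectorBasis i)
    rw [← isSymmetric_toEuclideanLin_iff.mpr hH, hHb, real_smul_eq_coe_smul (K := 𝕜),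
      inner_smul_left, conj_ofReal]
  have hexpand : re ⟪x, toEuclideanLin H x⟫_𝕜 = ∑ i, hH.eigenvalues i * ‖⟪b i, x⟫_𝕜‖ ^ 2 := by
    rw [← b.sum_inner_mul_inner, map_sum]
    refine Finset.sum_congr rfl fun i _ => ?_
    rw [hb, mul_left_comm, re_ofReal_mul, inner_mul_symm_re_eq_norm, norm_mul,
      norm_inner_symm, sq]
  calc (⨅ i, hH.eigenvalues i) * ‖x‖ ^ 2
      = ∑ i, (⨅ i, hH.eigenvalues i) * ‖⟪b i, x⟫_𝕜‖ ^ 2 := by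
        rw [← Finset.mul_sum, b.sum_sq_norm_inner_right]
    _ ≤ ∑ i, hH.eigenvalues i * ‖⟪b i, x⟫_𝕜‖ ^ 2 := by
        gcongr with i
        exact ciInf_le (Finite.bddBelow_range _) i
    _ = _ := hexpand.symm

theorem re_inner_toEuclideanLin_conjTranspose (A : Matrix ι ι 𝕜) (x : EuclideanSpace 𝕜 ι) :
    re ⟪x, toEuclideanLin Aᴴ x⟫_𝕜 = re ⟪x, toEuclideanLin A x⟫_𝕜 := by
  rw [toEuclideanLin_conjTranspose_eq_adjoint, LinearMap.adjoint_inner_right, inner_re_symm]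

theorem re_inner_toEuclideanLin_hermitianPart (A : Matrix ι ι 𝕜) (x : EuclideanSpace 𝕜 ι) :
    re ⟪x, toEuclideanLin ((1 / 2 : 𝕜) • (Aᴴ + A)) x⟫_𝕜 = re ⟪x, toEuclideanLin A x⟫_𝕜 := by
  have half : (1 / 2 : 𝕜) = ((1 / 2 : ℝ) : 𝕜) := by push_cast; rfl
  rw [half, map_smul, map_add, LinearMap.smul_apply, LinearMap.add_apply, inner_smul_right,
    re_ofReal_mul, inner_add_right, map_add, re_inner_toEuclideanLin_conjTranspose]
  ring

end Matrix

theorem stmt13_general {n : ℕ} (A : Matrix (Fin n) (Fin n) ℂ)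
    (H : Matrix (Fin n) (Fin n) ℂ) (hHdef : H = (1 / 2 : ℂ) • (Aᴴ + A))
    (hH : H.PosDef) (y xn r : EuclideanSpace ℂ (Fin n))
    (hr : r = y - mulVecE A xn) :
    ∃ α : ℂ, ‖y - mulVecE A (xn + α • r)‖
      ≤ Real.sqrt (1 - ((⨅ i, hH.1.eigenvalues i) / opNorm A) ^ 2) * ‖r‖ := by
  subst hHdef
  set T := toEuclideanCLM (n := Fin n) (𝕜 := ℂ) A
  have hT (x : EuclideanSpace ℂ (Fin n)) :
      (⨅ i, hH.1.eigenvalues i) * ‖x‖ ^ 2 ≤ re ⟪x, T x⟫_ℂ :=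
    (hH.1.iInf_eigenvalues_mul_norm_sq_le_re_inner x).trans_eq
    (re_inner_toEuclideanLin_hermitianPart A x)
  obtain ⟨α, hα⟩ := T.exists_norm_sub_smul_apply_le_s13
    (Real.iInf_nonneg fun i => (hH.eigenvalues_pos i).le) hT r
  have hres : y - mulVecE A (xn + α • r) = r - α • T r := by
    change y - T (xn + α • r) = _
    rw [map_add, map_smul, ← sub_sub, hr]
    rfl
  exact ⟨α, hres ▸ hα⟩

theorem stmt13 {n : ℕ} (hn : 0 < n) (A : Matrix (Fin n) (Fin n) ℂ)
    (H : Matrix (Fin n) (Fin n) ℂ) (hHdef : H = (1 / 2 : ℂ) • (Aᴴ + A))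
    (hH : H.PosDef) (y xn r : EuclideanSpace ℂ (Fin n))
    (hr : r = y - mulVecE A xn) :
    ∃ α : ℂ, ‖y - mulVecE A (xn + α • r)‖
      ≤ Real.sqrt (1 - ((⨅ i, hH.1.eigenvalues i) / opNorm A) ^ 2) * ‖r‖ :=
  stmt13_general A H hHdef hH y xn r hr
end
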